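/- arXiv:2202.10795 — 2 statements merged into one kernel-verified Lean document; each statement's English description precedes it below -/
import Mathlib

section
/- For countable measurable partitions: if P is a countable partition of a probability space (X, μ) and {B_i}_{i∈I} is a countable collection of measurable sets with ⋃ B_i = X, then the Shannon entropy H(P) is at most Σ_{i∈I} H(P_{B_i}), where P_{B_i} = {A ∩ B_i : A ∈ P} and H of a countable disjoint collection {C_j} of measurable sets is Σ_j −μ(C_j) log μ(C_j). -/
open MeasureTheory Real

lemma key_negMulLog (t : ENNReal) (ht1 : t ≤ 1) (a : ℕ → ENNReal) (ha : ∀ i, a i ≤ t)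
    (hsum : t ≤ ∑' i, a i) :
    ENNReal.ofReal (negMulLog t.toReal) ≤ ∑' i, ENNReal.ofReal (negMulLog ((a i).toReal)) := by
  have htne : t ≠ ⊤ := ne_top_of_le_ne_top ENNReal.one_ne_top ht1
  set c : ℝ := -Real.log t.toReal with hc
  have hc0 : 0 ≤ c := by
    rw [hc, neg_nonneg]
    exact Real.log_nonpos (ENNReal.toReal_nonneg) (by
      simpa using ENNReal.toReal_mono ENNReal.one_ne_top ht1)
  have hterm : ∀ i, a i * ENNReal.ofReal c ≤ ENNReal.ofReal (negMulLog ((a i).toReal)) := by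
    intro i
    have hane : a i ≠ ⊤ := ne_top_of_le_ne_top htne (ha i)
    rcases eq_or_ne (a i) 0 with h0 | h0
    · simp [h0, negMulLog]
    · have hapos : 0 < (a i).toReal := ENNReal.toReal_pos h0 hane
      have hle : (a i).toReal ≤ t.toReal := ENNReal.toReal_mono htne (ha i)
      have hlog : Real.log (a i).toReal ≤ Real.log t.toReal :=
        Real.log_le_log hapos hle
      have : (a i).toReal * c ≤ negMulLog ((a i).toReal) := by
        rw [negMulLog, hc]
        nlinarith [mul_le_mul_of_nonneg_left (neg_le_neg hlog) hapos.le]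
      calc a i * ENNReal.ofReal c = ENNReal.ofReal ((a i).toReal * c) := by
            rw [ENNReal.ofReal_mul ENNReal.toReal_nonneg, ENNReal.ofReal_toReal hane]
        _ ≤ _ := ENNReal.ofReal_le_ofReal this
  calc ENNReal.ofReal (negMulLog t.toReal)
      = t * ENNReal.ofReal c := by
        rw [negMulLog, neg_mul_comm, ENNReal.ofReal_mul ENNReal.toReal_nonneg,
          ENNReal.ofReal_toReal htne]
    _ ≤ (∑' i, a i) * ENNReal.ofReal c := by
        exact mul_le_mul_left hsum _
    _ = ∑' i, a i * ENNReal.ofReal c := (ENNReal.tsum_mul_right).symm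
    _ ≤ _ := ENNReal.tsum_le_tsum hterm

/-- Subadditivity of Shannon entropy of a countable partition with respect to a
countable cover: `H(P) ≤ Σ_i H(P restricted to B_i)`. -/
theorem stmt_5 {X : Type*} [MeasurableSpace X] (μ : Measure X) [IsProbabilityMeasure μ]
    (P : ℕ → Set X) (hPmeas : ∀ j, MeasurableSet (P j))
    (hPdisj : Pairwise (Function.onFun Disjoint P)) (hPcover : (⋃ j, P j) = Set.univ)
    (B : ℕ → Set X) (hBmeas : ∀ i, MeasurableSet (B i)) (hBcover : (⋃ i, B i) = Set.univ) :
    (∑' j, ENNReal.ofReal (negMulLog ((μ (P j)).toReal)))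
      ≤ ∑' i, ∑' j, ENNReal.ofReal (negMulLog ((μ (P j ∩ B i)).toReal)) := by
  rw [ENNReal.tsum_comm]
  refine ENNReal.tsum_le_tsum fun j => ?_
  refine key_negMulLog _ (prob_le_one) _ (fun i => measure_mono Set.inter_subset_left) ?_
  have : P j = ⋃ i, P j ∩ B i := by
    rw [← Set.inter_iUnion, hBcover, Set.inter_univ]
  calc μ (P j) = μ (⋃ i, P j ∩ B i) := by rw [← this]
    _ ≤ ∑' i, μ (P j ∩ B i) := measure_iUnion_le _
end

section
/- Let T be the infinite virtually cyclic setting: G infinite virtually cyclic with a ∈ G generating a finite-index normal subgroup, and let Q_g for g ∈ G be the cocycle partitions of a Shannon cocycle κ : G × X → H. Then for all n, m ∈ ℕ: (1/[G:⟨a^m⟩]) H(Q_{a^m}) ≥ (1/[G:⟨a^{nm}⟩]) H(Q_{a^{nm}}), i.e., the sequence m ↦ (1/[G:⟨a^m⟩]) H(Q_{a^m}) is decreasing along divisibility. -/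
open MeasureTheory Real

/-!
Write `H(f) = ∑ₛ -μ(f = s) log μ(f = s)` for the entropy of the partition of `X` into the
fibres of `f`. It does not increase under coarsening (as `-log` is decreasing) and is
subadditive on joins (Gibbs' inequality, from `log x ≤ x - 1`). The cocycle identity
`κ(g^(k+1), x) = κ(g, g^k x) κ(g^k, x)` makes `Q_{g^(k+1)}` a coarsening of the join of
`g^(-k) Q_g` and `Q_{g^k}`, so invariance of `μ` gives `H(Q_{g^n}) ≤ n H(Q_g)`. As `⟨a⟩` has finite
index in an infinite group, `a` has infinite order and `[G : ⟨a^(nm)⟩] = n [G : ⟨a^m⟩]`.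
-/

section NegMulLogSums

variable {ι α β : Type*}

lemma negMulLog_tsum_le {p : ι → ℝ} (hp : 0 ≤ p) (hps : Summable p)
    (hns : Summable fun i => negMulLog (p i)) :
    negMulLog (∑' i, p i) ≤ ∑' i, negMulLog (p i) := by
  have hlog : ∀ i, p i * -log (∑' j, p j) ≤ negMulLog (p i) := by
    intro i
    rcases (hp i).eq_or_lt with h | h
    · simp [← h]
    · rw [negMulLog, neg_mul, mul_neg, neg_le_neg_iff]
      exact mul_le_mul_of_nonneg_left (log_le_log h (hps.le_tsum i fun j _ => hp j)) (hp i)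
  calc negMulLog (∑' i, p i) = ∑' i, p i * -log (∑' j, p j) := by
        rw [tsum_mul_right, negMulLog, neg_mul, mul_neg]
    _ ≤ ∑' i, negMulLog (p i) := (hps.mul_right _).tsum_le_tsum hlog hns

lemma hasSum_of_hasSum_fiberwise_of_nonneg {f : ι → ℝ} (hf : 0 ≤ f) (φ : ι → β) {g : β → ℝ}
    {a : ℝ} (hfib : ∀ b, HasSum (fun i : φ ⁻¹' {b} => f i) (g b)) (hg : HasSum g a) :
    HasSum f a := by
  have hsum : Summable f := by
    rw [← (Equiv.sigmaFiberEquiv φ).summable_iff]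
    refine (summable_sigma_of_nonneg fun _ => hf _).2 ⟨fun b => (hfib b).summable, ?_⟩
    exact hg.summable.congr fun b => (hfib b).tsum_eq.symm
  convert hsum.hasSum
  exact hg.unique ((funext fun b => (hfib b).tsum_eq) ▸ hsum.hasSum.tsum_fiberwise φ)

lemma tsum_negMulLog_le_of_hasSum_fiberwise {p : ι → ℝ} {q : β → ℝ} (φ : ι → β) (hp : 0 ≤ p)
    (hq : ∀ b, HasSum (fun i : φ ⁻¹' {b} => p i) (q b)) (hq1 : ∀ b, q b ≤ 1)
    (hnp : Summable fun i => negMulLog (p i)) :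
    ∑' b, negMulLog (q b) ≤ ∑' i, negMulLog (p i) := by
  have hfib : ∀ b, negMulLog (q b) ≤ ∑' i : φ ⁻¹' {b}, negMulLog (p i) := fun b =>
    (hq b).tsum_eq ▸ negMulLog_tsum_le (fun _ => hp _) (hq b).summable (hnp.subtype _)
  have hsum := hnp.hasSum.tsum_fiberwise φ
  have hq0 : ∀ b, 0 ≤ negMulLog (q b) := fun b =>
    negMulLog_nonneg ((hq b).nonneg fun _ => hp _) (hq1 b)
  exact hasSum_le hfib (hsum.summable.of_nonneg_of_le hq0 hfib).hasSum hsum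

lemma negMulLog_le_of_le_of_le {q a b : ℝ} (hq : 0 ≤ q) (ha : q ≤ a) (hb : q ≤ b) :
    negMulLog q ≤ q * -log a + q * -log b + (a * b - q) := by
  rcases hq.eq_or_lt with rfl | hq
  · simpa using mul_nonneg ha hb
  have ha0 : 0 < a := hq.trans_le ha
  have hb0 : 0 < b := hq.trans_le hb
  -- `log x ≤ x - 1` at `x = a * b / q`
  have key := log_le_sub_one_of_pos (show 0 < a * b / q by positivity)
  rw [log_div (by positivity) hq.ne', log_mul ha0.ne' hb0.ne'] at key
  have := mul_le_mul_of_nonneg_left key hq.le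
  rw [mul_sub q (a * b / q), mul_div_cancel₀ _ hq.ne'] at this
  simp only [negMulLog]
  linarith

lemma hasSum_mul_neg_log_of_hasSum_fiberwise {q : ι → ℝ} {p : α → ℝ} (φ : ι → α) (hq : 0 ≤ q)
    (hfib : ∀ a, HasSum (fun i : φ ⁻¹' {a} => q i) (p a)) (hp1 : HasSum p 1)
    (hnp : Summable fun a => negMulLog (p a)) :
    HasSum (fun i => q i * -log (p (φ i))) (∑' a, negMulLog (p a)) := by
  have hp0 : ∀ a, 0 ≤ p a := fun a => (hfib a).nonneg fun _ => hq _
  have hlog : ∀ i, 0 ≤ -log (p (φ i)) := fun i =>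
    neg_nonneg.2 (log_nonpos (hp0 _) (le_hasSum hp1 _ fun _ _ => hp0 _))
  refine hasSum_of_hasSum_fiberwise_of_nonneg (fun i => mul_nonneg (hq i) (hlog i)) φ
    (fun a => ?_) hnp.hasSum
  have hφ : ∀ i : φ ⁻¹' {a}, φ i = a := fun i => i.2
  simpa only [hφ, negMulLog, neg_mul, mul_neg] using (hfib a).mul_right (-log (p a))

section Gibbs

variable {q : α × β → ℝ} {pA : α → ℝ} {pB : β → ℝ} (hq : 0 ≤ q)
  (hA : ∀ a, HasSum (fun i : (Prod.fst ⁻¹' {a} : Set (α × β)) => q i) (pA a))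
  (hB : ∀ b, HasSum (fun i : (Prod.snd ⁻¹' {b} : Set (α × β)) => q i) (pB b))
  (hA1 : HasSum pA 1) (hB1 : HasSum pB 1)
  (hEA : Summable fun a => negMulLog (pA a)) (hEB : Summable fun b => negMulLog (pB b))
include hq hA hB

lemma le_of_hasSum_marginals (i : α × β) : q i ≤ pA i.1 ∧ q i ≤ pB i.2 :=
  ⟨le_hasSum (hA i.1) ⟨i, rfl⟩ fun _ _ => hq _, le_hasSum (hB i.2) ⟨i, rfl⟩ fun _ _ => hq _⟩

lemma negMulLog_le_gibbs_bound (i : α × β) :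
    negMulLog (q i) ≤ q i * -log (pA i.1) + q i * -log (pB i.2) + (pA i.1 * pB i.2 - q i) :=
  negMulLog_le_of_le_of_le (hq i) (le_of_hasSum_marginals hq hA hB i).1
    (le_of_hasSum_marginals hq hA hB i).2

include hA1 hB1 hEA hEB

lemma hasSum_gibbs_bound :
    HasSum (fun i => q i * -log (pA i.1) + q i * -log (pB i.2) + (pA i.1 * pB i.2 - q i))
      (∑' a, negMulLog (pA a) + ∑' b, negMulLog (pB b)) := by
  have hpA : 0 ≤ pA := fun a => (hA a).nonneg fun _ => hq _
  have hpB : 0 ≤ pB := fun b => (hB b).nonneg fun _ => hq _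
  have hprod := hA1.mul hB1 (hA1.summable.mul_of_nonneg hB1.summable hpA hpB)
  have hq1 : HasSum q 1 := hasSum_of_hasSum_fiberwise_of_nonneg hq Prod.fst hA hA1
  simpa using ((hasSum_mul_neg_log_of_hasSum_fiberwise Prod.fst hq hA hA1 hEA).add
    (hasSum_mul_neg_log_of_hasSum_fiberwise Prod.snd hq hB hB1 hEB)).add (hprod.sub hq1)

lemma summable_negMulLog_of_hasSum_marginals : Summable fun i => negMulLog (q i) := by
  refine (hasSum_gibbs_bound hq hA hB hA1 hB1 hEA hEB).summable.of_nonneg_of_le (fun i => ?_)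
    (negMulLog_le_gibbs_bound hq hA hB)
  have hpA1 : pA i.1 ≤ 1 := le_hasSum hA1 _ fun a _ => (hA a).nonneg fun _ => hq _
  exact negMulLog_nonneg (hq i) ((le_of_hasSum_marginals hq hA hB i).1.trans hpA1)

lemma tsum_negMulLog_le_of_hasSum_marginals :
    ∑' i, negMulLog (q i) ≤ ∑' a, negMulLog (pA a) + ∑' b, negMulLog (pB b) :=
  hasSum_le (negMulLog_le_gibbs_bound hq hA hB)
    (summable_negMulLog_of_hasSum_marginals hq hA hB hA1 hB1 hEA hEB).hasSum
    (hasSum_gibbs_bound hq hA hB hA1 hB1 hEA hEB)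

end Gibbs

end NegMulLogSums

section PartitionEntropy

variable {X α β γ : Type*} [MeasurableSpace X] {μ : Measure X}

noncomputable def partitionEntropy (μ : Measure X) (f : X → α) : ℝ :=
  ∑' s, negMulLog (μ.real {x | f x = s})

lemma partitionEntropy_const [IsProbabilityMeasure μ] (c : α) :
    partitionEntropy μ (fun _ : X => c) = 0 := by
  refine (tsum_congr fun s => ?_).trans tsum_zero
  by_cases h : c = s <;> simp [h]

lemma hasSum_measureReal_iUnion [IsFiniteMeasure μ] {ι : Type*} [Countable ι] {A : ι → Set X}
    (hA : ∀ i, MeasurableSet (A i)) (hd : Pairwise (Function.onFun Disjoint A)) :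
    HasSum (fun i => μ.real (A i)) (μ.real (⋃ i, A i)) := by
  have htop : ∑' i, μ (A i) ≠ ⊤ := by
    rw [← measure_iUnion hd hA]; exact measure_ne_top μ _
  rw [measureReal_def, measure_iUnion hd hA, ENNReal.tsum_toReal_eq fun _ => measure_ne_top μ _]
  exact ENNReal.hasSum_toReal htop

lemma measureReal_fiber_comp_smul {G : Type*} [Group G] [MulAction G X]
    [SMulInvariantMeasure G X μ] (f : X → α) (c : G) (s : α) :
    μ.real {x | f (c • x) = s} = μ.real {x | f x = s} :=
  congrArg ENNReal.toReal (measure_preimage_smul μ c {x | f x = s})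

variable [Countable α] {F : X → α}

lemma hasSum_measureReal_fiber [IsFiniteMeasure μ] (hF : ∀ s, MeasurableSet {x | F x = s})
    (φ : α → β) (b : β) :
    HasSum (fun s : φ ⁻¹' {b} => μ.real {x | F x = s}) (μ.real {x | φ (F x) = b}) := by
  have hU : {x | φ (F x) = b} = ⋃ s : φ ⁻¹' {b}, {x | F x = s} := by
    ext x; simp
  rw [hU]
  exact hasSum_measureReal_iUnion (fun s => hF s) fun s t hst => Set.disjoint_left.2
    fun x hs ht => hst (Subtype.ext (hs.symm.trans ht))

lemma hasSum_measureReal_fiber_univ [IsProbabilityMeasure μ]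
    (hF : ∀ s, MeasurableSet {x | F x = s}) :
    HasSum (fun s => μ.real {x | F x = s}) 1 := by
  have hU : ⋃ s, {x | F x = s} = Set.univ := by
    ext x; simp
  simpa [hU] using hasSum_measureReal_iUnion (μ := μ) hF fun s t hst => Set.disjoint_left.2
    fun x hs ht => hst (hs.symm.trans ht)

variable [IsProbabilityMeasure μ]

lemma partitionEntropy_comp_le (hF : ∀ s, MeasurableSet {x | F x = s}) (φ : α → β)
    (hE : Summable fun s => negMulLog (μ.real {x | F x = s})) :
    partitionEntropy μ (fun x => φ (F x)) ≤ partitionEntropy μ F :=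
  tsum_negMulLog_le_of_hasSum_fiberwise φ (fun _ => measureReal_nonneg)
    (hasSum_measureReal_fiber hF φ) (fun _ => measureReal_le_one) hE

lemma partitionEntropy_map₂_le [Countable β] {f : X → α} {g : X → β}
    (hf : ∀ s, MeasurableSet {x | f x = s}) (hg : ∀ t, MeasurableSet {x | g x = t})
    (hEf : Summable fun s => negMulLog (μ.real {x | f x = s}))
    (hEg : Summable fun t => negMulLog (μ.real {x | g x = t})) (op : α → β → γ) :
    partitionEntropy μ (fun x => op (f x) (g x)) ≤ partitionEntropy μ f + partitionEntropy μ g := by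
  have hfg : ∀ i : α × β, MeasurableSet {x | (f x, g x) = i} := fun i => by
    simp only [Prod.ext_iff]; exact (hf i.1).inter (hg i.2)
  have hA := hasSum_measureReal_fiber (μ := μ) hfg Prod.fst
  have hB := hasSum_measureReal_fiber (μ := μ) hfg Prod.snd
  have hA1 := hasSum_measureReal_fiber_univ (μ := μ) hf
  have hB1 := hasSum_measureReal_fiber_univ (μ := μ) hg
  have hq : 0 ≤ fun i : α × β => μ.real {x | (f x, g x) = i} := fun _ => measureReal_nonneg
  exact (partitionEntropy_comp_le hfg (Function.uncurry op)
    (summable_negMulLog_of_hasSum_marginals hq hA hB hA1 hB1 hEf hEg)).trans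
    (tsum_negMulLog_le_of_hasSum_marginals hq hA hB hA1 hB1 hEf hEg)

end PartitionEntropy

section Cocycle

variable {G H X : Type*} [Group G] [Group H] [MulAction G X] {κ : G → X → H}

lemma cocycle_one_apply (hcoc : ∀ (g h : G) (x : X), κ (g * h) x = κ g (h • x) * κ h x)
    (x : X) : κ 1 x = 1 := by
  simpa using hcoc 1 1 x

variable [Countable H] [MeasurableSpace X] {μ : Measure X} [IsProbabilityMeasure μ]
  [SMulInvariantMeasure G X μ]

lemma partitionEntropy_cocycle_pow_le (hmG : ∀ g : G, Measurable (fun x : X => g • x))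
    (hκmeas : ∀ (g : G) (s : H), MeasurableSet {x | κ g x = s})
    (hcoc : ∀ (g h : G) (x : X), κ (g * h) x = κ g (h • x) * κ h x)
    (hShannon : ∀ g : G, Summable (fun s : H => negMulLog (μ.real {x | κ g x = s})))
    (g : G) (n : ℕ) :
    partitionEntropy μ (κ (g ^ n)) ≤ n * partitionEntropy μ (κ g) := by
  induction n with
  | zero =>
    rw [pow_zero, funext (cocycle_one_apply hcoc), partitionEntropy_const]
    simp
  | succ n ih =>
    have hsplit : κ (g ^ (n + 1)) = fun x => κ g (g ^ n • x) * κ (g ^ n) x :=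
      funext fun x => by rw [pow_succ', hcoc]
    have hshift : partitionEntropy μ (fun x => κ g (g ^ n • x)) = partitionEntropy μ (κ g) :=
      tsum_congr fun s => by rw [measureReal_fiber_comp_smul]
    calc partitionEntropy μ (κ (g ^ (n + 1)))
        ≤ partitionEntropy μ (fun x => κ g (g ^ n • x)) + partitionEntropy μ (κ (g ^ n)) :=
          hsplit ▸ partitionEntropy_map₂_le (fun s => hmG (g ^ n) (hκmeas g s)) (hκmeas _)
            (by simpa only [measureReal_fiber_comp_smul] using hShannon g) (hShannon _) (· * ·)
      _ ≤ partitionEntropy μ (κ g) + n * partitionEntropy μ (κ g) := by rw [hshift]; gcongr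
      _ = (n + 1 : ℕ) * partitionEntropy μ (κ g) := by push_cast; ring

end Cocycle

section ZPowers

variable {G : Type*} [Group G]

lemma not_isOfFinOrder_of_index_zpowers_ne_zero [Infinite G] {a : G}
    (h : (Subgroup.zpowers a).index ≠ 0) : ¬IsOfFinOrder a := by
  rw [← orderOf_eq_zero_iff, ← Nat.card_zpowers]
  have := (Subgroup.zpowers a).index_mul_card
  rw [Nat.card_eq_zero_of_infinite (α := G)] at this
  exact (mul_eq_zero.1 this).resolve_left h

lemma Subgroup.index_zpowers_pow {b : G} (hb : ¬IsOfFinOrder b) (n : ℕ) :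
    (zpowers (b ^ n)).index = n * (zpowers b).index := by
  have hcomap : (zpowers (b ^ n)).comap (zpowersHom G b) =
      (AddSubgroup.zmultiples (n : ℤ)).toSubgroup := by
    ext z
    simp only [mem_comap, zpowersHom_apply, mem_zpowers_iff, Multiplicative.mem_toSubgroup,
      AddSubgroup.mem_zmultiples_iff, ← zpow_natCast, ← zpow_mul,
      (injective_zpow_iff_not_isOfFinOrder.2 hb).eq_iff, smul_eq_mul, mul_comm]
  have hrel : (zpowers (b ^ n)).relIndex (zpowers b) = n := by
    have := relIndex_comap (zpowers (b ^ n)) (zpowersHom G b) ⊤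
    rwa [relIndex_top_right, hcomap, AddSubgroup.index_toSubgroup, Int.index_zmultiples,
      Int.natAbs_natCast, ← MonoidHom.range_eq_map, range_zpowersHom, eq_comm] at this
  rw [← relIndex_mul_index (zpowers_le.2 (npow_mem_zpowers b n)), hrel]

end ZPowers

theorem stmt_10_general {G H X : Type*} [Group G] [Group H] [Countable H]
    [Infinite G] [MeasurableSpace X] [MulAction G X]
    (hmG : ∀ g : G, Measurable (fun x : X => g • x))
    (μ : Measure X) [IsProbabilityMeasure μ] [SMulInvariantMeasure G X μ]
    (a : G) (haind : (Subgroup.zpowers a).index ≠ 0)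
    (κ : G → X → H) (hκmeas : ∀ (g : G) (s : H), MeasurableSet {x | κ g x = s})
    (hcoc : ∀ (g h : G) (x : X), κ (g * h) x = κ g (h • x) * κ h x)
    (hShannon : ∀ g : G, Summable (fun s : H => negMulLog ((μ {x | κ g x = s}).toReal))) :
    ∀ n m : ℕ, 1 ≤ n → 1 ≤ m →
      (∑' s : H, negMulLog ((μ {x | κ (a ^ (n * m)) x = s}).toReal))
          / ((Subgroup.zpowers (a ^ (n * m))).index : ℝ)
        ≤ (∑' s : H, negMulLog ((μ {x | κ (a ^ m) x = s}).toReal))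
          / ((Subgroup.zpowers (a ^ m)).index : ℝ) := by
  intro n m hn _
  have ha := not_isOfFinOrder_of_index_zpowers_ne_zero haind
  have hentropy : partitionEntropy μ (κ (a ^ (n * m))) ≤ n * partitionEntropy μ (κ (a ^ m)) := by
    rw [mul_comm, pow_mul]
    exact partitionEntropy_cocycle_pow_le hmG hκmeas hcoc hShannon (a ^ m) n
  change partitionEntropy μ (κ (a ^ (n * m))) / _ ≤ partitionEntropy μ (κ (a ^ m)) / _
  have hn0 : (n : ℝ) ≠ 0 := Nat.cast_ne_zero.2 (Nat.one_le_iff_ne_zero.1 hn)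
  rw [Subgroup.index_zpowers_pow ha, Subgroup.index_zpowers_pow ha, Nat.cast_mul, Nat.cast_mul,
    Nat.cast_mul, mul_assoc]
  calc partitionEntropy μ (κ (a ^ (n * m))) / (n * (m * (Subgroup.zpowers a).index))
      ≤ n * partitionEntropy μ (κ (a ^ m)) / (n * (m * (Subgroup.zpowers a).index)) := by
        gcongr
    _ = partitionEntropy μ (κ (a ^ m)) / (m * (Subgroup.zpowers a).index) :=
        mul_div_mul_left _ _ hn0

/-- Monotonicity along divisibility of the normalized cocycle-partition
entropies `m ↦ H(Q_{a^m}) / [G : ⟨a^m⟩]` for a Shannon cocycle over an infinite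
virtually cyclic group. -/
theorem stmt_10 {G H X : Type*} [Group G] [Group H] [Countable G] [Countable H]
    [Infinite G] [MeasurableSpace X] [MulAction G X]
    (hmG : ∀ g : G, Measurable (fun x : X => g • x))
    (μ : Measure X) [IsProbabilityMeasure μ] [SMulInvariantMeasure G X μ]
    (hfree : ∀ (g : G) (x : X), g • x = x → g = 1)
    (a : G) (hanorm : (Subgroup.zpowers a).Normal) (haind : (Subgroup.zpowers a).index ≠ 0)
    (κ : G → X → H) (hκmeas : ∀ (g : G) (s : H), MeasurableSet {x | κ g x = s})
    (hcoc : ∀ (g h : G) (x : X), κ (g * h) x = κ g (h • x) * κ h x)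
    (hShannon : ∀ g : G, Summable (fun s : H => negMulLog ((μ {x | κ g x = s}).toReal))) :
    ∀ n m : ℕ, 1 ≤ n → 1 ≤ m →
      (∑' s : H, negMulLog ((μ {x | κ (a ^ (n * m)) x = s}).toReal))
          / ((Subgroup.zpowers (a ^ (n * m))).index : ℝ)
        ≤ (∑' s : H, negMulLog ((μ {x | κ (a ^ m) x = s}).toReal))
          / ((Subgroup.zpowers (a ^ m)).index : ℝ) :=
  stmt_10_general hmG μ a haind κ hκmeas hcoc hShannon
end
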